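/- Under the assumptions guaranteeing the implied vol I(y) is well defined (unique positive solution of c_b(y, I(y)) = E[c_b(y + η(G-1), √G)]), if η = 0 then I is an even function of y; conversely, if I is even then the ATM skew I'(0) = -√(π/2)·E[erf((η/√2)·(1-G)/√G)] vanishes, which occurs only if η = 0. -/

import Mathlib

open MeasureTheory ProbabilityTheory Real

noncomputable def normalPdf (x : ℝ) : ℝ := (Real.sqrt (2 * Real.pi))⁻¹ * Real.exp (-(x ^ 2) / 2)

noncomputable def normalCdf (x : ℝ) : ℝ := ∫ t in Set.Iic x, normalPdf t

noncomputable def cb (y σ : ℝ) : ℝ := -y * normalCdf (-y / σ) + σ * normalPdf (-y / σ)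

/-!
The Bachelier price `cb` is strictly increasing in the volatility and satisfies put–call parity
`cb (-y) σ = y + cb y σ`. As `E[G - 1] = 0`, parity passes to the mixture price
`F η y = E[cb (y + η (G - 1)) √G]` in the form `F (-η) (-y) = y + F η y`, so `I` is even exactly
when `F (-η) = F η`, which is automatic for `η = 0`.

Conversely, let `η > 0`. By the mean value theorem in `y`, the integrand of `F (-η) y - F η y` is
at least `2η (g₀ - 1) Φ(-(y + η (g₁ - 1)) / √g₀)` where `g₀ ≤ G ≤ g₁`, and at least
`-2η Φ(-(y - η))` everywhere once `y ≥ η`. Nondegeneracy gives such a band of positive mass with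
`g₀ > 1`, and a Gaussian tail of variance `g₀ > 1` eventually dominates one of variance `1`, so the
difference cannot vanish for all `y`.
-/

open Set Filter Topology

lemma normalPdf_eq_gaussianPDFReal : normalPdf = gaussianPDFReal 0 1 := by
  ext x
  simp [normalPdf, gaussianPDFReal]

lemma normalPdf_pos (x : ℝ) : 0 < normalPdf x := by
  unfold normalPdf
  positivity

lemma normalPdf_neg (x : ℝ) : normalPdf (-x) = normalPdf x := by
  simp [normalPdf]

lemma normalPdf_div_normalPdf (a b : ℝ) :
    normalPdf a / normalPdf b = exp ((b ^ 2 - a ^ 2) / 2) := by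
  unfold normalPdf
  rw [mul_div_mul_left _ _ (by positivity), ← exp_sub]
  ring_nf

lemma normalPdf_le_normalPdf {s t : ℝ} (h : |t| ≤ s) : normalPdf s ≤ normalPdf t := by
  have hsq : t ^ 2 ≤ s ^ 2 := sq_le_sq' (abs_le.1 h).1 (abs_le.1 h).2
  unfold normalPdf
  exact mul_le_mul_of_nonneg_left (exp_le_exp.2 (by linarith)) (by positivity)

lemma continuous_normalPdf : Continuous normalPdf := by
  unfold normalPdf
  fun_prop

lemma hasDerivAt_normalPdf (x : ℝ) : HasDerivAt normalPdf (-x * normalPdf x) x := by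
  unfold normalPdf
  refine (((hasDerivAt_pow 2 x).neg.div_const 2).exp.const_mul (√(2 * π))⁻¹).congr_deriv ?_
  simp only [Pi.neg_apply]
  ring

lemma integrable_normalPdf : Integrable normalPdf :=
  normalPdf_eq_gaussianPDFReal ▸ integrable_gaussianPDFReal 0 1

lemma integral_normalPdf : ∫ x, normalPdf x = 1 :=
  normalPdf_eq_gaussianPDFReal ▸ integral_gaussianPDFReal_eq_one 0 one_ne_zero

lemma integrable_neg_mul_normalPdf : Integrable fun t => -t * normalPdf t := by
  have h := (integrable_mul_exp_neg_mul_sq (by norm_num : (0 : ℝ) < 1 / 2)).const_mul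
    (-(√(2 * π))⁻¹)
  convert h using 2 with t
  unfold normalPdf
  ring_nf

lemma normalCdf_sub_normalCdf (a b : ℝ) :
    normalCdf b - normalCdf a = ∫ t in a..b, normalPdf t :=
  intervalIntegral.integral_Iic_sub_Iic integrable_normalPdf.integrableOn
    integrable_normalPdf.integrableOn

lemma hasDerivAt_normalCdf (x : ℝ) : HasDerivAt normalCdf (normalPdf x) x := by
  have h := (intervalIntegral.integral_hasDerivAt_right (a := 0) (b := x)
    integrable_normalPdf.intervalIntegrable
    continuous_normalPdf.aestronglyMeasurable.stronglyMeasurableAtFilter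
    continuous_normalPdf.continuousAt).const_add (normalCdf 0)
  have e : normalCdf = fun u => normalCdf 0 + ∫ t in (0 : ℝ)..u, normalPdf t := by
    funext u
    rw [← normalCdf_sub_normalCdf]
    ring
  rwa [e]

lemma normalCdf_mono : Monotone normalCdf := fun a b hab => by
  have := intervalIntegral.integral_nonneg (μ := volume) hab fun t _ => (normalPdf_pos t).le
  linarith [normalCdf_sub_normalCdf a b]

lemma normalCdf_pos (x : ℝ) : 0 < normalCdf x := by
  have h := intervalIntegral.intervalIntegral_pos_of_pos integrable_normalPdf.intervalIntegrable
    normalPdf_pos (sub_one_lt x)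
  have : 0 ≤ normalCdf (x - 1) :=
    setIntegral_nonneg measurableSet_Iic fun t _ => (normalPdf_pos t).le
  linarith [normalCdf_sub_normalCdf (x - 1) x]

lemma normalCdf_add_normalCdf_neg (x : ℝ) : normalCdf x + normalCdf (-x) = 1 := by
  have h : normalCdf (-x) = ∫ t in Ioi x, normalPdf t := by
    simpa [normalCdf, normalPdf_neg] using integral_comp_neg_Iic (-x) normalPdf
  rw [h, ← integral_normalPdf]
  exact intervalIntegral.integral_Iic_add_Ioi integrable_normalPdf.integrableOn
    integrable_normalPdf.integrableOn

lemma normalCdf_neg_le_normalPdf_div {x : ℝ} (hx : 0 < x) :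
    normalCdf (-x) ≤ normalPdf x / x := by
  have hmills : ∫ t in Iic (-x), -t * normalPdf t = normalPdf x := by
    simpa [normalPdf_neg] using integral_Iic_of_hasDerivAt_of_tendsto' (a := -x)
      (fun t _ => hasDerivAt_normalPdf t) integrable_neg_mul_normalPdf.integrableOn
      (tendsto_zero_of_hasDerivAt_of_integrableOn_Iic (a := 0) (fun t _ => hasDerivAt_normalPdf t)
        integrable_neg_mul_normalPdf.integrableOn integrable_normalPdf.integrableOn)
  have hle : normalCdf (-x) ≤ ∫ t in Iic (-x), -t * normalPdf t / x :=
    setIntegral_mono_on integrable_normalPdf.integrableOn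
      (integrable_neg_mul_normalPdf.div_const x).integrableOn measurableSet_Iic fun t ht => by
        rw [le_div_iff₀ hx]
        nlinarith [ht.out, normalPdf_pos t]
  rwa [integral_div, hmills] at hle

lemma normalPdf_add_one_le_normalCdf_neg {x : ℝ} (hx : 0 ≤ x) :
    normalPdf (x + 1) ≤ normalCdf (-x) := by
  have h := intervalIntegral.integral_mono_on (by linarith : -x - 1 ≤ -x)
    intervalIntegrable_const integrable_normalPdf.intervalIntegrable
    fun t ht =>
      normalPdf_le_normalPdf (s := x + 1) (abs_le.2 ⟨by linarith [ht.1], by linarith [ht.2]⟩)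
  have : 0 < normalCdf (-x - 1) := normalCdf_pos _
  simp only [intervalIntegral.integral_const, smul_eq_mul] at h
  linarith [normalCdf_sub_normalCdf (-x - 1) (-x)]

lemma tendsto_normalCdf_neg_div_normalCdf_neg {s : ℝ} (hs : 1 < s) (c d : ℝ) :
    Tendsto (fun y => normalCdf (-(y + c)) / normalCdf (-((y + d) / s))) atTop (𝓝 0) := by
  have hs0 : 0 < s := by linarith
  have hdiff : Tendsto (fun y => (y + d) / s + 1 - (y + c)) atTop atBot := by
    refine (tendsto_atBot_add_const_right _ (d / s + 1 - c)
      (tendsto_id.const_mul_atTop_of_neg (by rwa [sub_neg, inv_lt_one₀ hs0] : s⁻¹ - 1 < 0))).congr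
        fun y => ?_
    simp only [id]
    field_simp
    ring
  have hsum : Tendsto (fun y => (y + d) / s + 1 + (y + c)) atTop atTop := by
    refine (tendsto_atTop_add_const_right _ (d / s + 1 + c)
      (tendsto_id.const_mul_atTop (by positivity : 0 < s⁻¹ + 1))).congr fun y => ?_
    simp only [id]
    field_simp
    ring
  have hexp : Tendsto (fun y => exp ((((y + d) / s + 1) ^ 2 - (y + c) ^ 2) / 2)) atTop (𝓝 0) := by
    refine tendsto_exp_atBot.comp (((hdiff.atBot_mul_atTop₀ hsum).atBot_div_const two_pos).congr
      fun y => ?_)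
    ring
  refine tendsto_of_tendsto_of_tendsto_of_le_of_le' tendsto_const_nhds hexp
    (Eventually.of_forall fun y => div_nonneg (normalCdf_pos _).le (normalCdf_pos _).le) ?_
  filter_upwards [eventually_ge_atTop (1 - c), eventually_ge_atTop (-d)] with y hyc hyd
  have hnum : normalCdf (-(y + c)) ≤ normalPdf (y + c) :=
    (normalCdf_neg_le_normalPdf_div (by linarith)).trans
      (div_le_self (normalPdf_pos _).le (by linarith))
  have hden := normalPdf_add_one_le_normalCdf_neg (div_nonneg (by linarith : 0 ≤ y + d) hs0.le)
  rw [← normalPdf_div_normalPdf]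
  exact div_le_div₀ (normalPdf_pos _).le hnum (normalPdf_pos _) hden

lemma cb_neg (y σ : ℝ) : cb (-y) σ = y + cb y σ := by
  have hΦ := normalCdf_add_normalCdf_neg (-y / σ)
  simp only [cb, neg_neg, neg_div, normalPdf_neg] at hΦ ⊢
  linear_combination y * hΦ

lemma hasDerivAt_cb_right (y : ℝ) {σ : ℝ} (hσ : σ ≠ 0) :
    HasDerivAt (cb y) (normalPdf (-y / σ)) σ := by
  have hinner : HasDerivAt (fun s => -y / s) (y / σ ^ 2) σ := by
    simpa [div_eq_mul_inv] using ((hasDerivAt_inv hσ).const_mul (-y)).congr_deriv (by field_simp)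
  refine (((hasDerivAt_normalCdf _).comp σ hinner).const_mul (-y) |>.add
    ((hasDerivAt_id σ).mul ((hasDerivAt_normalPdf _).comp σ hinner))).congr_deriv ?_
  simp only [id, Function.comp_apply]
  field_simp
  ring

lemma strictMonoOn_cb (y : ℝ) : StrictMonoOn (cb y) (Ioi 0) :=
  strictMonoOn_of_hasDerivWithinAt_pos (convex_Ioi 0)
    (fun _ hσ => (hasDerivAt_cb_right y (ne_of_gt hσ)).continuousAt.continuousWithinAt)
    (fun _ hσ => (hasDerivAt_cb_right y (ne_of_gt (interior_subset hσ))).hasDerivWithinAt)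
    fun _ _ => normalPdf_pos _

lemma hasDerivAt_cb_left {σ : ℝ} (hσ : σ ≠ 0) (y : ℝ) :
    HasDerivAt (fun v => cb v σ) (-normalCdf (-y / σ)) y := by
  have hinner : HasDerivAt (fun v : ℝ => -v / σ) (-1 / σ) y := by
    simpa using (hasDerivAt_id y).neg.div_const σ
  refine ((hasDerivAt_id y).neg.mul ((hasDerivAt_normalCdf _).comp y hinner) |>.add
    (((hasDerivAt_normalPdf _).comp y hinner).const_mul σ)).congr_deriv ?_
  simp only [Pi.neg_apply, id, Function.comp_apply]
  field_simp
  ring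

lemma exists_cb_sub_cb_eq {σ a b : ℝ} (hσ : 0 < σ) (hab : a < b) :
    ∃ c ∈ Ioo a b, cb a σ - cb b σ = (b - a) * normalCdf (-c / σ) := by
  obtain ⟨c, hc, hslope⟩ := exists_hasDerivAt_eq_slope (fun v => cb v σ) _ hab
    (fun u _ => (hasDerivAt_cb_left hσ.ne' u).continuousAt.continuousWithinAt)
    fun u _ => hasDerivAt_cb_left hσ.ne' u
  refine ⟨c, hc, ?_⟩
  rw [eq_div_iff (sub_ne_zero.2 hab.ne')] at hslope
  linarith

lemma mul_normalCdf_le_cb_sub_cb {σ a b : ℝ} (hσ : 0 < σ) (hab : a ≤ b) :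
    (b - a) * normalCdf (-b / σ) ≤ cb a σ - cb b σ := by
  rcases hab.eq_or_lt with rfl | hab
  · simp
  obtain ⟨c, hc, hcb⟩ := exists_cb_sub_cb_eq hσ hab
  rw [hcb]
  exact mul_le_mul_of_nonneg_left (normalCdf_mono (by gcongr; exact hc.2.le)) (by linarith)

lemma cb_sub_cb_le_mul_normalCdf {σ a b : ℝ} (hσ : 0 < σ) (hab : a ≤ b) :
    cb a σ - cb b σ ≤ (b - a) * normalCdf (-a / σ) := by
  rcases hab.eq_or_lt with rfl | hab
  · simp
  obtain ⟨c, hc, hcb⟩ := exists_cb_sub_cb_eq hσ hab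
  rw [hcb]
  exact mul_le_mul_of_nonneg_left (normalCdf_mono (by gcongr; exact hc.1.le)) (by linarith)

noncomputable def callSpread (η y g : ℝ) : ℝ :=
  cb (y + -η * (g - 1)) (√g) - cb (y + η * (g - 1)) (√g)

lemma neg_le_callSpread {η g y : ℝ} (hη : 0 ≤ η) (hg : 0 < g) (hy : η ≤ y) :
    -(2 * η * normalCdf (-(y - η))) ≤ callSpread η y g := by
  have hσ : 0 < √g := sqrt_pos.2 hg
  rw [callSpread, neg_mul, ← sub_eq_add_neg]
  rcases le_total 1 g with hg1 | hg1
  · have hmv := mul_normalCdf_le_cb_sub_cb hσ (by nlinarith : y - η * (g - 1) ≤ y + η * (g - 1))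
    have := mul_nonneg (by nlinarith : 0 ≤ y + η * (g - 1) - (y - η * (g - 1)))
      (normalCdf_pos (-(y + η * (g - 1)) / √g)).le
    have := normalCdf_pos (-(y - η))
    nlinarith
  · have hmv := cb_sub_cb_le_mul_normalCdf hσ (by nlinarith : y + η * (g - 1) ≤ y - η * (g - 1))
    have harg : -(y + η * (g - 1)) / √g ≤ -(y - η) := by
      rw [neg_div, neg_le_neg_iff]
      calc y - η ≤ y + η * (g - 1) := by nlinarith
        _ ≤ (y + η * (g - 1)) / √g := le_div_self (by nlinarith) hσ (sqrt_le_one.2 hg1)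
    have := mul_le_mul (by nlinarith : y - η * (g - 1) - (y + η * (g - 1)) ≤ 2 * η)
      (normalCdf_mono harg) (normalCdf_pos _).le (by linarith)
    linarith

lemma le_callSpread_of_mem_Icc {η g g₀ g₁ y : ℝ} (hη : 0 ≤ η) (hg₀ : 1 ≤ g₀) (hg : g ∈ Icc g₀ g₁)
    (hy : 0 ≤ y) :
    2 * η * (g₀ - 1) * normalCdf (-((y + η * (g₁ - 1)) / √g₀)) ≤ callSpread η y g := by
  obtain ⟨hg₀g, hgg₁⟩ := hg
  have hσ₀ : 0 < √g₀ := sqrt_pos.2 (by linarith)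
  have hσ : √g₀ ≤ √g := sqrt_le_sqrt hg₀g
  have hmv := mul_normalCdf_le_cb_sub_cb (hσ₀.trans_le hσ)
    (by nlinarith : y - η * (g - 1) ≤ y + η * (g - 1))
  have harg : -((y + η * (g₁ - 1)) / √g₀) ≤ -(y + η * (g - 1)) / √g := by
    rw [neg_div, neg_le_neg_iff]
    exact div_le_div₀ (by nlinarith) (by nlinarith) hσ₀ hσ
  rw [callSpread, neg_mul, ← sub_eq_add_neg]
  refine le_trans ?_ hmv
  rw [show y + η * (g - 1) - (y - η * (g - 1)) = 2 * η * (g - 1) by ring]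
  exact mul_le_mul (by nlinarith) (normalCdf_mono harg) (normalCdf_pos _).le (by nlinarith)

section Measure

variable {Ω : Type*} [MeasurableSpace Ω] {μ : Measure Ω}

lemma exists_measure_preimage_Icc_pos {f : Ω → ℝ} {a : ℝ} (h : 0 < μ {ω | a < f ω}) :
    ∃ b c, a < b ∧ 0 < μ (f ⁻¹' Icc b c) := by
  have hcover : {ω | a < f ω} ⊆ ⋃ mn : ℕ × ℕ, f ⁻¹' Icc (a + 1 / (mn.1 + 1)) (a + mn.2) := by
    intro ω (hω : a < f ω)
    obtain ⟨m, hm⟩ := exists_nat_one_div_lt (sub_pos.2 hω)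
    obtain ⟨n, hn⟩ := exists_nat_ge (f ω - a)
    exact mem_iUnion.2 ⟨(m, n), by constructor <;> linarith⟩
  obtain ⟨⟨m, n⟩, hmn⟩ := exists_measure_pos_of_not_measure_iUnion_null
    fun h0 => h.ne' (measure_mono_null hcover h0)
  exact ⟨_, _, lt_add_of_pos_right a (by positivity), hmn⟩

variable [IsProbabilityMeasure μ]

lemma measure_one_lt_pos {G : Ω → ℝ} (hG : Integrable G μ) (hmean : ∫ ω, G ω ∂μ = 1)
    (hnondeg : ¬ ∀ᵐ ω ∂μ, G ω = 1) : 0 < μ {ω | 1 < G ω} := by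
  refine pos_iff_ne_zero.2 fun h => hnondeg ?_
  have hle : G ≤ᵐ[μ] fun _ => 1 := by
    rw [EventuallyLE, ae_iff]
    simpa using h
  exact (integral_eq_iff_of_ae_le hG (integrable_const 1) hle).1 (by simp [hmean])

lemma mul_measureReal_sub_le_integral {f : Ω → ℝ} {s : Set Ω} {a b : ℝ}
    (hs : NullMeasurableSet s μ) (hf : Integrable f μ) (hb : 0 ≤ b) (has : ∀ ω ∈ s, a ≤ f ω)
    (hbf : ∀ᵐ ω ∂μ, -b ≤ f ω) : a * μ.real s - b ≤ ∫ ω, f ω ∂μ := by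
  rw [← integral_add_compl₀ hs hf]
  have hin := integral_mono_ae (integrable_const a) (hf.restrict (s := s))
    ((ae_restrict_mem₀ hs).mono has)
  have hout := integral_mono_ae (integrable_const (-b)) (hf.restrict (s := sᶜ))
    (ae_restrict_of_ae hbf)
  have : μ.real sᶜ ≤ 1 := measureReal_le_one
  simp only [integral_const, smul_eq_mul, measureReal_restrict_apply_univ] at hin hout
  nlinarith

end Measure

noncomputable def mixturePrice {Ω : Type*} [MeasurableSpace Ω] (μ : Measure Ω) (G : Ω → ℝ)
    (η y : ℝ) : ℝ :=
  ∫ ω, cb (y + η * (G ω - 1)) (√(G ω)) ∂μ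

section MixturePrice

variable {Ω : Type*} [MeasurableSpace Ω] {μ : Measure Ω} [IsProbabilityMeasure μ] {G : Ω → ℝ}
  {η : ℝ}

lemma integrable_mul_sub_one (hG : Integrable G μ) (η : ℝ) :
    Integrable (fun ω => η * (G ω - 1)) μ :=
  (hG.sub (integrable_const 1)).const_mul η

lemma integrable_add_mul_sub_one (hG : Integrable G μ) (y η : ℝ) :
    Integrable (fun ω => y + η * (G ω - 1)) μ :=
  (integrable_const y).add (integrable_mul_sub_one hG η)

lemma integral_add_mul_sub_one (hG : Integrable G μ) (hmean : ∫ ω, G ω ∂μ = 1) (y η : ℝ) :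
    ∫ ω, (y + η * (G ω - 1)) ∂μ = y := by
  rw [integral_add (integrable_const y) (integrable_mul_sub_one hG η), integral_const_mul,
    integral_sub hG (integrable_const 1), hmean]
  simp

lemma integrable_cb_add_neg_mul (hG : Integrable G μ)
    (hint : ∀ y, Integrable (fun ω => cb (y + η * (G ω - 1)) (√(G ω))) μ) (y : ℝ) :
    Integrable (fun ω => cb (y + -η * (G ω - 1)) (√(G ω))) μ := by
  refine ((integrable_add_mul_sub_one hG (-y) η).add (hint (-y))).congr
    (ae_of_all _ fun ω => ?_)
  simp only [Pi.add_apply]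
  rw [← cb_neg]
  ring_nf

lemma mixturePrice_neg_neg (hG : Integrable G μ) (hmean : ∫ ω, G ω ∂μ = 1) {y : ℝ}
    (hint : Integrable (fun ω => cb (y + η * (G ω - 1)) (√(G ω))) μ) :
    mixturePrice μ G (-η) (-y) = y + mixturePrice μ G η y := by
  have hparity : ∀ ω, cb (-y + -η * (G ω - 1)) (√(G ω))
      = y + η * (G ω - 1) + cb (y + η * (G ω - 1)) (√(G ω)) := fun ω => by
    rw [← cb_neg]
    ring_nf
  simp only [mixturePrice, hparity]
  rw [integral_add (integrable_add_mul_sub_one hG y η) hint,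
    integral_add_mul_sub_one hG hmean]

lemma integrable_callSpread (hG : Integrable G μ)
    (hint : ∀ y, Integrable (fun ω => cb (y + η * (G ω - 1)) (√(G ω))) μ) (y : ℝ) :
    Integrable (fun ω => callSpread η y (G ω)) μ :=
  (integrable_cb_add_neg_mul hG hint y).sub (hint y)

lemma integral_callSpread (hG : Integrable G μ)
    (hint : ∀ y, Integrable (fun ω => cb (y + η * (G ω - 1)) (√(G ω))) μ) (y : ℝ) :
    ∫ ω, callSpread η y (G ω) ∂μ = mixturePrice μ G (-η) y - mixturePrice μ G η y :=
  integral_sub (integrable_cb_add_neg_mul hG hint y) (hint y)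

lemma exists_mixturePrice_neg_ne (hη : 0 < η) (hG : Integrable G μ) (hpos : ∀ᵐ ω ∂μ, 0 < G ω)
    (hmean : ∫ ω, G ω ∂μ = 1) (hnondeg : ¬ ∀ᵐ ω ∂μ, G ω = 1)
    (hint : ∀ y, Integrable (fun ω => cb (y + η * (G ω - 1)) (√(G ω))) μ) :
    ∃ y, mixturePrice μ G (-η) y ≠ mixturePrice μ G η y := by
  by_contra! hsym
  obtain ⟨g₀, g₁, hg₀, hS⟩ := exists_measure_preimage_Icc_pos (measure_one_lt_pos hG hmean hnondeg)
  set S := G ⁻¹' Icc g₀ g₁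
  have hbound : ∀ y, η ≤ y → 2 * η * (g₀ - 1) * μ.real S * normalCdf (-((y + η * (g₁ - 1)) / √g₀))
      ≤ 2 * η * normalCdf (-(y + -η)) := by
    intro y hy
    have h := mul_measureReal_sub_le_integral (s := S)
      (hG.aemeasurable.nullMeasurableSet_preimage measurableSet_Icc)
      (integrable_callSpread hG hint y)
      (mul_nonneg (by positivity) (normalCdf_pos _).le)
      (fun ω hω => le_callSpread_of_mem_Icc hη.le hg₀.le hω (by linarith))
      (hpos.mono fun ω hω => neg_le_callSpread hη.le hω hy)
    rw [integral_callSpread hG hint, hsym, sub_self] at h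
    rw [← sub_eq_add_neg]
    linarith
  have hg₀_sqrt : 1 < √g₀ := (lt_sqrt zero_le_one).2 (by simpa using hg₀)
  have htail := (tendsto_normalCdf_neg_div_normalCdf_neg hg₀_sqrt (-η) (η * (g₁ - 1))).const_mul
    (2 * η)
  rw [mul_zero] at htail
  have hle : 2 * η * (g₀ - 1) * μ.real S ≤ 0 := ge_of_tendsto htail <| by
    filter_upwards [eventually_ge_atTop η] with y hy
    rw [← mul_div_assoc, le_div_iff₀ (normalCdf_pos _)]
    exact hbound y hy
  have hweight : 0 < 2 * η * (g₀ - 1) * μ.real S :=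
    mul_pos (by nlinarith) (ENNReal.toReal_pos hS.ne' (measure_ne_top μ _))
  linarith

lemma eq_zero_of_mixturePrice_neg_eq (hG : Integrable G μ) (hpos : ∀ᵐ ω ∂μ, 0 < G ω)
    (hmean : ∫ ω, G ω ∂μ = 1) (hnondeg : ¬ ∀ᵐ ω ∂μ, G ω = 1)
    (hint : ∀ y, Integrable (fun ω => cb (y + η * (G ω - 1)) (√(G ω))) μ)
    (hsym : ∀ y, mixturePrice μ G (-η) y = mixturePrice μ G η y) : η = 0 := by
  rcases lt_trichotomy η 0 with hη | hη | hη
  · obtain ⟨y, hy⟩ := exists_mixturePrice_neg_ne (neg_pos.2 hη) hG hpos hmean hnondeg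
      (integrable_cb_add_neg_mul hG hint)
    rw [neg_neg] at hy
    exact absurd (hsym y).symm hy
  · exact hη
  · obtain ⟨y, hy⟩ := exists_mixturePrice_neg_ne hη hG hpos hmean hnondeg hint
    exact absurd (hsym y) hy

end MixturePrice

theorem implied_vol_even_iff_eta_zero {Ω : Type*} [MeasurableSpace Ω] (μ : Measure Ω)
    [IsProbabilityMeasure μ] (G : Ω → ℝ) (η : ℝ)
    (hpos : ∀ᵐ ω ∂μ, 0 < G ω) (hG : Integrable G μ)
    (hmean : ∫ ω, G ω ∂μ = 1)
    (hnondeg : ¬ (∀ᵐ ω ∂μ, G ω = 1))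
    (hint : ∀ y : ℝ,
      Integrable (fun ω => cb (y + η * (G ω - 1)) (Real.sqrt (G ω))) μ)
    (I : ℝ → ℝ)
    (hIpos : ∀ y, 0 < I y)
    (hIeq : ∀ y,
      cb y (I y) = ∫ ω, cb (y + η * (G ω - 1)) (Real.sqrt (G ω)) ∂μ) :
    (η = 0 → ∀ y, I (-y) = I y) ∧ ((∀ y, I (-y) = I y) → η = 0) := by
  have hparity : ∀ y, mixturePrice μ G (-η) (-y) = cb (-y) (I y) := fun y => by
    rw [mixturePrice_neg_neg hG hmean (hint y), cb_neg, hIeq]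
    rfl
  constructor
  · rintro rfl y
    refine (strictMonoOn_cb (-y)).injOn (hIpos (-y)) (hIpos y) ?_
    rw [← hparity y, neg_zero]
    exact hIeq (-y)
  · intro heven
    refine eq_zero_of_mixturePrice_neg_eq hG hpos hmean hnondeg hint fun y => ?_
    calc mixturePrice μ G (-η) y = cb y (I (-y)) := by simpa using hparity (-y)
      _ = mixturePrice μ G η y := by rw [heven]; exact hIeq y
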